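/- arXiv:2401.15517 — 8 statements merged into one kernel-verified Lean document; each statement's English description precedes it below -/
import Mathlib

section
/- Let s ≥ 1, n ≥ 1 be integers and let θ ∈ ℂ^s have all entries nonzero and pairwise distinct, such that the values θ_0^n, …, θ_{s−1}^n are not all equal. Then there exists g ∈ ℂ^s with all entries nonzero such that the polynomial ũ(z) = −Σ_{l} g_l·t_l(z) is a nonzero constant and the polynomial û(z) = Σ_{l} g_l·θ_l^n·t_l(z) has degree at least one; in particular, ũ and û have no common root. -/
open Polynomial Finset

/-- `t_l(z) = ∏_{i ≠ l} (z·θ_i − 1)`. -/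
noncomputable def tPoly (s : ℕ) (θ : Fin s → ℂ) (l : Fin s) : Polynomial ℂ :=
  ∏ i ∈ Finset.univ.erase l, (Polynomial.C (θ i) * Polynomial.X - 1)

/-- `û(z) = Σ_l g_l · θ_l^n · t_l(z)`. -/
noncomputable def uHat (s n : ℕ) (θ g : Fin s → ℂ) : Polynomial ℂ :=
  ∑ l : Fin s, Polynomial.C (g l * θ l ^ n) * tPoly s θ l

/-- `ũ(z) = −Σ_l g_l · t_l(z)`. -/
noncomputable def uTilde (s : ℕ) (θ g : Fin s → ℂ) : Polynomial ℂ :=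
  -∑ l : Fin s, Polynomial.C (g l) * tPoly s θ l

lemma tPoly_eval_self (s : ℕ) (θ : Fin s → ℂ) (hθ0 : ∀ l, θ l ≠ 0)
    (hθinj : Function.Injective θ) (l : Fin s) :
    (tPoly s θ l).eval (θ l)⁻¹ ≠ 0 := by
  rw [tPoly, eval_prod]
  refine Finset.prod_ne_zero_iff.mpr fun i hi => ?_
  simp only [eval_sub, eval_mul, eval_C, eval_X, eval_one, sub_ne_zero]
  intro h
  apply (Finset.mem_erase.mp hi).1
  apply hθinj
  field_simp at h
  rwa [div_eq_one_iff_eq (hθ0 l)] at h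

lemma tPoly_eval_other (s : ℕ) (θ : Fin s → ℂ) (hθ0 : ∀ l, θ l ≠ 0)
    {l k : Fin s} (hkl : k ≠ l) :
    (tPoly s θ l).eval (θ k)⁻¹ = 0 := by
  rw [tPoly, eval_prod]
  refine Finset.prod_eq_zero (Finset.mem_erase.mpr ⟨hkl, Finset.mem_univ k⟩) ?_
  simp [mul_inv_cancel₀ (hθ0 k)]

lemma tPoly_natDegree_le (s : ℕ) (θ : Fin s → ℂ) (l : Fin s) :
    (tPoly s θ l).natDegree ≤ s - 1 := by
  refine le_trans (Polynomial.natDegree_prod_le _ _) ?_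
  calc ∑ i ∈ Finset.univ.erase l, (Polynomial.C (θ i) * Polynomial.X - 1).natDegree
      ≤ ∑ i ∈ Finset.univ.erase l, 1 := by
        refine Finset.sum_le_sum fun i _ => ?_
        calc (Polynomial.C (θ i) * Polynomial.X - 1).natDegree
            ≤ max (Polynomial.C (θ i) * Polynomial.X).natDegree (1 : Polynomial ℂ).natDegree :=
              Polynomial.natDegree_sub_le _ _
          _ ≤ 1 := by
              simp only [Polynomial.natDegree_one, max_le_iff]
              constructor
              · exact le_trans (Polynomial.natDegree_mul_le) (by simp)
              · exact Nat.zero_le 1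
    _ = s - 1 := by
        rw [Finset.sum_const, smul_eq_mul, mul_one, Finset.card_erase_of_mem (Finset.mem_univ l),
          Finset.card_univ, Fintype.card_fin]

/-- if `θ ∈ ℂ^s` has nonzero pairwise distinct entries and the values
`θ_0^n, …, θ_{s−1}^n` are not all equal, then there is a `g` with all entries nonzero
such that `ũ` is a nonzero constant, `û` has degree at least one, and (in particular)
`ũ` and `û` have no common root. -/
theorem exists_g_no_common_root (s n : ℕ) (hs : 1 ≤ s) (hn : 1 ≤ n) (θ : Fin s → ℂ)
    (hθ0 : ∀ l, θ l ≠ 0) (hθinj : Function.Injective θ)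
    (hne : ∃ k k' : Fin s, θ k ^ n ≠ θ k' ^ n) :
    ∃ g : Fin s → ℂ, (∀ l, g l ≠ 0) ∧
      (∃ c : ℂ, c ≠ 0 ∧ uTilde s θ g = Polynomial.C c) ∧
      1 ≤ (uHat s n θ g).degree ∧
      ∀ z : ℂ, ¬((uTilde s θ g).IsRoot z ∧ (uHat s n θ g).IsRoot z) := by
  set g : Fin s → ℂ := fun l => -((tPoly s θ l).eval (θ l)⁻¹)⁻¹ with hg
  have hgne : ∀ l, g l ≠ 0 := fun l => by
    simp [hg, tPoly_eval_self s θ hθ0 hθinj l]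
  -- evaluations
  have hTildeEval : ∀ k : Fin s, (uTilde s θ g).eval (θ k)⁻¹ = 1 := by
    intro k
    rw [uTilde, eval_neg, eval_finset_sum]
    rw [Finset.sum_eq_single k]
    · simp only [eval_mul, eval_C, hg, neg_mul, neg_neg]
      exact inv_mul_cancel₀ (tPoly_eval_self s θ hθ0 hθinj k)
    · intro b _ hb
      simp [tPoly_eval_other s θ hθ0 hb.symm]
    · simp
  have hHatEval : ∀ k : Fin s, (uHat s n θ g).eval (θ k)⁻¹ = -θ k ^ n := by
    intro k
    rw [uHat, eval_finset_sum]
    rw [Finset.sum_eq_single k]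
    · simp only [eval_mul, eval_C, hg]
      have he := tPoly_eval_self s θ hθ0 hθinj k
      have he' : (tPoly s θ k).eval (1 / θ k) ≠ 0 := by rwa [one_div]
      field_simp
    · intro b _ hb
      simp [tPoly_eval_other s θ hθ0 hb.symm]
    · simp
  -- inverse map injective
  have hinvinj : Function.Injective (fun k : Fin s => (θ k)⁻¹) := by
    intro a b hab
    exact hθinj (by
      have := congrArg (·⁻¹) hab
      simpa using this)
  -- uTilde = C 1
  have hTilde : uTilde s θ g = Polynomial.C 1 := by
    have hzero : uTilde s θ g - Polynomial.C 1 = 0 := by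
      apply Polynomial.eq_zero_of_natDegree_lt_card_of_eval_eq_zero _ hinvinj
      · intro k
        simp [hTildeEval k]
      · rw [Fintype.card_fin]
        refine lt_of_le_of_lt ?_ (Nat.sub_lt_self Nat.one_pos hs : s - 1 < s)
        refine le_trans (Polynomial.natDegree_sub_le _ _) ?_
        simp only [Polynomial.natDegree_C, max_le_iff]
        refine ⟨?_, Nat.zero_le _⟩
        rw [uTilde, natDegree_neg]
        refine Polynomial.natDegree_sum_le_of_forall_le _ _ fun l _ => ?_
        exact le_trans (Polynomial.natDegree_mul_le)
          (by simpa using tPoly_natDegree_le s θ l)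
    have := sub_eq_zero.mp hzero
    simpa using this
  -- uHat degree
  obtain ⟨k, k', hkk'⟩ := hne
  have hHatdeg : 1 ≤ (uHat s n θ g).degree := by
    rw [Nat.WithBot.one_le_iff_zero_lt, ← not_le]
    intro hle
    have ha := Polynomial.degree_le_zero_iff.mp hle
    apply hkk'
    have h1 := hHatEval k
    have h2 := hHatEval k'
    rw [ha] at h1 h2
    simp only [eval_C] at h1 h2
    exact neg_injective (h1.symm.trans h2)
  refine ⟨g, hgne, ⟨1, one_ne_zero, hTilde⟩, hHatdeg, fun z ⟨hz1, _⟩ => ?_⟩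
  rw [hTilde] at hz1
  simp [Polynomial.IsRoot] at hz1
end

section
/- Let s ≥ 1, n ≥ 1 be integers and let θ ∈ ℂ^s have all entries nonzero and pairwise distinct. (i) If θ_0^n = θ_1^n = … = θ_{s−1}^n = c for some c ∈ ℂ, then û(z) = −c·ũ(z) for every g ∈ ℂ^s, so û and ũ have exactly the same roots whenever they are nonzero. (ii) If the values θ_0^n, …, θ_{s−1}^n are not all equal, then the set of g ∈ ℂ^s for which û and ũ have a common root has Lebesgue measure zero in ℂ^s ≅ ℝ^{2s}; i.e., for almost every g ∈ ℂ^s, the polynomials û and ũ share no common root. -/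
open Polynomial Finset MeasureTheory

/-!
(i) is a rearrangement of the defining sums. For (ii), the resultant of `û` and `ũ`, taken
with formal degrees `s - 1`, is a polynomial in the coordinates of `g`; it vanishes wherever
`û` and `ũ` share a root, and the zero set of a nonzero polynomial on `ℂ^s` is Lebesgue-null
(Fubini, by induction on `s`). It is nonzero: `t_l` is a nonzero multiple of the Lagrange basis
polynomial `B_l` at the nodes `θ_i⁻¹`, so for a suitable `g` the polynomials `ũ` and `-û`
interpolate the values `r_l` and `θ_l^n r_l`; since the `θ_l^n` are not all equal, some `r` makes
`ũ` of exact degree `s - 1` and coprime to `û`.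
-/

namespace Polynomial

theorem resultant_eq_zero_of_isRoot {R : Type*} [CommRing R] {f g : R[X]} {m n : ℕ}
    (hf : f.natDegree ≤ m) (hg : g.natDegree ≤ n) (hmn : m ≠ 0 ∨ n ≠ 0) {z : R}
    (hfz : f.IsRoot z) (hgz : g.IsRoot z) : resultant f g m n = 0 := by
  obtain ⟨p, q, -, -, h⟩ := exists_mul_add_mul_eq_C_resultant f g hf hg hmn
  simpa [hfz.eq_zero, hgz.eq_zero] using congrArg (eval z) h.symm

theorem resultant_ne_zero_of_forall_not_isRoot {K : Type*} [Field K] [IsAlgClosed K]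
    {f g : K[X]} {m n : ℕ} (hf : f.natDegree ≤ m) (hg : g.natDegree ≤ n) (hgn : g.coeff n ≠ 0)
    (hroot : ∀ z, ¬(f.IsRoot z ∧ g.IsRoot z)) : resultant f g m n ≠ 0 := by
  have hcop : IsCoprime f g := (isCoprime_iff_aeval_ne_zero_of_isAlgClosed K K f g).mpr
    fun z => by simpa using not_and_or.mp (hroot z)
  obtain rfl : g.natDegree = n := natDegree_eq_of_le_of_coeff_ne_zero hg hgn
  obtain ⟨k, rfl⟩ := Nat.exists_eq_add_of_le hf
  rw [resultant_add_left_deg _ _ _ _ _ le_rfl]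
  exact mul_ne_zero (mul_ne_zero (by simp) (pow_ne_zero _ hgn)) (resultant_ne_zero f g hcop)

variable {R : Type*} [CommRing R] {ι : Type*} [Fintype ι]

noncomputable def genericLinComb (p : ι → R[X]) : (MvPolynomial ι R)[X] :=
  ∑ i, C (MvPolynomial.X i) * (p i).map MvPolynomial.C

theorem map_eval_genericLinComb (p : ι → R[X]) (x : ι → R) :
    (genericLinComb p).map (MvPolynomial.eval x) = ∑ i, C (x i) * p i := by
  have hC : (MvPolynomial.eval x).comp MvPolynomial.C = RingHom.id R :=
    RingHom.ext fun _ => MvPolynomial.eval_C _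
  simp [genericLinComb, Polynomial.map_sum, Polynomial.map_map, hC]

theorem natDegree_sum_C_mul_le {N : ℕ} {p : ι → R[X]} (hp : ∀ i, (p i).natDegree ≤ N)
    (x : ι → R) : (∑ i, C (x i) * p i).natDegree ≤ N :=
  natDegree_sum_le_of_forall_le _ _ fun i _ => (natDegree_C_mul_le _ _).trans (hp i)

end Polynomial

namespace MvPolynomial

theorem measure_pi_setOf_eval_eq_zero (μ : Measure ℂ) [NullSingletonClass μ] [SigmaFinite μ]
    {m : ℕ} {P : MvPolynomial (Fin m) ℂ} (hP : P ≠ 0) :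
    Measure.pi (fun _ => μ) {x | eval x P = 0} = 0 := by
  induction m with
  | zero =>
    rw [eq_C_of_isEmpty P] at hP ⊢
    simp_all
  | succ m ih =>
    set Q := finSuccEquiv ℂ m P
    have hQ : Q ≠ 0 := by simpa [Q] using hP
    have hS : MeasurableSet {x : Fin (m + 1) → ℂ | eval x P = 0} :=
      (isClosed_eq (continuous_eval P) continuous_const).measurableSet
    let e := MeasurableEquiv.piFinSuccAbove (fun _ : Fin (m + 1) => ℂ) 0
    rw [← (measurePreserving_piFinSuccAbove (fun _ => μ) 0).symm.measure_preimage_equiv,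
      Measure.prod_apply_symm (e.symm.measurable hS)]
    have hlead : ∀ᵐ y ∂Measure.pi (fun _ => μ), eval y Q.leadingCoeff ≠ 0 :=
      measure_eq_zero_iff_ae_notMem.mp (ih (leadingCoeff_ne_zero.mpr hQ))
    rw [lintegral_congr_ae (hlead.mono fun y hy => ?_), lintegral_zero]
    have hne : Q.map (eval y) ≠ 0 := fun h => hy <| by
      rw [leadingCoeff, ← Polynomial.coeff_map, h, Polynomial.coeff_zero]
    refine measure_mono_null (fun x hx => ?_) ((finite_setOfPred_isRoot hne).measure_zero μ)
    simpa [e, Q, ← eval_eq_eval_mv_eval', Fin.consEquiv] using hx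

end MvPolynomial

theorem measure_pi_setOf_exists_common_root_eq_zero (μ : Measure ℂ) [NullSingletonClass μ]
    [SigmaFinite μ] {s N : ℕ} (hN : N ≠ 0) {p q : Fin s → ℂ[X]}
    (hp : ∀ l, (p l).natDegree ≤ N) (hq : ∀ l, (q l).natDegree ≤ N) {x₀ : Fin s → ℂ}
    (hx₀ : resultant (∑ l, C (x₀ l) * p l) (∑ l, C (x₀ l) * q l) N N ≠ 0) :
    Measure.pi (fun _ => μ)
      {x | ∃ z, (∑ l, C (x l) * p l).IsRoot z ∧ (∑ l, C (x l) * q l).IsRoot z} = 0 := by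
  set P := resultant (genericLinComb p) (genericLinComb q) N N
  have hP (x : Fin s → ℂ) :
      MvPolynomial.eval x P = resultant (∑ l, C (x l) * p l) (∑ l, C (x l) * q l) N N := by
    rw [← resultant_map_map, map_eval_genericLinComb, map_eval_genericLinComb]
  refine measure_mono_null ?_ (MvPolynomial.measure_pi_setOf_eval_eq_zero μ
    (P := P) fun h => hx₀ (by rw [← hP, h, map_zero]))
  rintro x ⟨z, hpz, hqz⟩
  exact (hP x).trans (resultant_eq_zero_of_isRoot (natDegree_sum_C_mul_le hp x)
    (natDegree_sum_C_mul_le hq x) (Or.inl hN) hpz hqz)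

namespace Lagrange

variable {F : Type*} [Field F] [Infinite F] {ι : Type*} [Fintype ι] [DecidableEq ι]

theorem exists_interpolate_coeff_ne_zero_forall_not_isRoot {v : ι → F}
    (hv : Function.Injective v) {a : ι → F} {k k' : ι} (hk : a k ≠ a k') :
    ∃ r : ι → F, (interpolate univ v r).coeff (Fintype.card ι - 1) ≠ 0 ∧
      ∀ z, ¬((interpolate univ v (a * r)).IsRoot z ∧ (interpolate univ v r).IsRoot z) := by
  classical
  have hvs : Set.InjOn v (univ : Finset ι) := hv.injOn
  set V := interpolate univ v a - C (a k)
  have hV : V ≠ 0 := fun h => hk.symm <| by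
    simpa only [V, eval_sub, eval_C, eval_zero, eval_interpolate_at_node a hvs (mem_univ k'),
      sub_eq_zero] using congrArg (eval (v k')) h
  -- With `r = 1 + ε • e_k` the two interpolants are `U = 1 + ε B_k` and `V + a_k U`, so a common
  -- root `z` is a root of `V` with `ε = -(B_k z)⁻¹`: only finitely many `ε` are bad.
  obtain ⟨ε, hε⟩ := Infinite.exists_notMem_finset
    (insert 0 (V.roots.toFinset.image fun z => -(eval z (Lagrange.basis univ v k))⁻¹))
  simp only [mem_insert, mem_image, Multiset.mem_toFinset, not_or, not_exists, not_and] at hε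
  set r : ι → F := 1 + ε • Pi.single k 1
  have hU : interpolate univ v r = 1 + C ε * Lagrange.basis univ v k := by
    rw [map_add, map_smul, interpolate_one hvs ⟨k, mem_univ k⟩, C_mul']
    simp [interpolate_apply, Pi.single_apply]
  have hU' : interpolate univ v (a * r) = V + C (a k) * interpolate univ v r := by
    have : a * r = a + a k • (r - 1) := by
      ext i; by_cases h : i = k <;> simp [r, h]; ring
    rw [this, map_add, map_smul, map_sub, interpolate_one hvs ⟨k, mem_univ k⟩, smul_eq_C_mul]
    ring
  refine ⟨r, ?_, fun z ⟨hz', hz⟩ => ?_⟩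
  · have hcard : Fintype.card ι - 1 ≠ 0 := by
      have := Fintype.one_lt_card_iff_nontrivial.mpr ⟨k, k', fun h => hk (h ▸ rfl)⟩
      omega
    rw [hU, coeff_add, coeff_one, if_neg hcard, coeff_C_mul, zero_add,
      ← card_univ, ← natDegree_basis hvs (mem_univ k)]
    exact mul_ne_zero hε.1 (leadingCoeff_ne_zero.mpr (basis_ne_zero hvs (mem_univ k)))
  have hz1 : 1 + ε * eval z (Lagrange.basis univ v k) = 0 := by simpa [hU] using hz
  have hzV : V.IsRoot z := by
    rwa [IsRoot, hU', eval_add, eval_mul, hz.eq_zero, mul_zero, add_zero] at hz'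
  refine hε.2 z ((mem_roots hV).mpr hzV) ?_
  have hB : eval z (Lagrange.basis univ v k) ≠ 0 := fun h => by simp [h] at hz1
  field_simp
  linear_combination -hz1

end Lagrange

section

variable {s : ℕ} {θ : Fin s → ℂ}

theorem natDegree_tPoly_le (l : Fin s) : (tPoly s θ l).natDegree ≤ s - 1 := by
  have hlin (i : Fin s) : (C (θ i) * X - 1 : ℂ[X]).natDegree ≤ 1 :=
    (natDegree_sub_le _ _).trans
      (max_le ((natDegree_C_mul_le _ _).trans natDegree_X_le) (by simp))
  refine (natDegree_prod_le _ _).trans ((sum_le_sum fun i _ => hlin i).trans ?_)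
  simp

theorem natDegree_C_mul_tPoly_le (a : ℂ) (l : Fin s) : (C a * tPoly s θ l).natDegree ≤ s - 1 :=
  (natDegree_C_mul_le _ _).trans (natDegree_tPoly_le l)

theorem natDegree_neg_tPoly_le (l : Fin s) : (-tPoly s θ l).natDegree ≤ s - 1 :=
  (natDegree_neg _).trans_le (natDegree_tPoly_le l)

theorem uHat_eq_sum (n : ℕ) (g : Fin s → ℂ) :
    uHat s n θ g = ∑ l, C (g l) * (C (θ l ^ n) * tPoly s θ l) := by
  simp only [uHat, C_mul, mul_assoc]

theorem uTilde_eq_sum (g : Fin s → ℂ) : uTilde s θ g = ∑ l, C (g l) * -tPoly s θ l := by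
  simp only [uTilde, mul_neg, sum_neg_distrib]

theorem tPoly_eq_C_mul_basis (hθ0 : ∀ l, θ l ≠ 0) (hθ : Function.Injective θ) (l : Fin s) :
    tPoly s θ l = C (∏ i ∈ univ.erase l, (θ i / θ l - 1)) *
      Lagrange.basis univ (fun i => (θ i)⁻¹) l := by
  rw [tPoly, Lagrange.basis, map_prod, ← prod_mul_distrib]
  refine prod_congr rfl fun i hi => ?_
  have hil : θ i - θ l ≠ 0 := sub_ne_zero.mpr (hθ.ne (mem_erase.mp hi).1)
  have hcoeff : (θ i / θ l - 1) * ((θ l)⁻¹ - (θ i)⁻¹)⁻¹ = θ i := by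
    field_simp [hθ0 i, hθ0 l]
  rw [Lagrange.basisDivisor, ← mul_assoc, ← C_mul, hcoeff, mul_sub, ← C_mul,
    mul_inv_cancel₀ (hθ0 i), C_1]

theorem exists_uHat_uTilde_eq_interpolate (n : ℕ) (hθ0 : ∀ l, θ l ≠ 0)
    (hθ : Function.Injective θ) (r : Fin s → ℂ) :
    ∃ g, uHat s n θ g = -Lagrange.interpolate univ (fun i => (θ i)⁻¹) ((fun l => θ l ^ n) * r) ∧
      uTilde s θ g = Lagrange.interpolate univ (fun i => (θ i)⁻¹) r := by
  obtain ⟨c, hc, ht⟩ : ∃ c : Fin s → ℂ, (∀ l, c l ≠ 0) ∧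
      ∀ l, tPoly s θ l = C (c l) * Lagrange.basis univ (fun i => (θ i)⁻¹) l :=
    ⟨_, fun l => prod_ne_zero_iff.mpr fun i hi h =>
        hθ.ne (mem_erase.mp hi).1 ((div_eq_one_iff_eq (hθ0 l)).mp (sub_eq_zero.mp h)),
      tPoly_eq_C_mul_basis hθ0 hθ⟩
  refine ⟨fun l => -r l / c l, ?_, ?_⟩
  · simp only [uHat_eq_sum, ht, Lagrange.interpolate_apply, ← sum_neg_distrib]
    refine sum_congr rfl fun l _ => ?_
    rw [← mul_assoc, ← mul_assoc, ← C_mul, ← C_mul, ← neg_mul, ← C_neg]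
    congr 2
    field_simp [hc l]
    simp [mul_comm]
  · simp only [uTilde_eq_sum, ht, Lagrange.interpolate_apply]
    refine sum_congr rfl fun l _ => ?_
    rw [mul_neg, ← mul_assoc, ← C_mul, ← neg_mul, ← C_neg]
    congr 2
    field_simp [hc l]

theorem exists_resultant_uHat_uTilde_ne_zero {n : ℕ} (hθ0 : ∀ l, θ l ≠ 0)
    (hθ : Function.Injective θ) {k k' : Fin s} (hk : θ k ^ n ≠ θ k' ^ n) :
    ∃ g, resultant (uHat s n θ g) (uTilde s θ g) (s - 1) (s - 1) ≠ 0 := by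
  obtain ⟨r, hcoeff, hroot⟩ :=
    Lagrange.exists_interpolate_coeff_ne_zero_forall_not_isRoot (v := fun i => (θ i)⁻¹)
      (a := fun l => θ l ^ n) (fun i j h => hθ (inv_injective h)) hk
  obtain ⟨g, hĝ, hg⟩ := exists_uHat_uTilde_eq_interpolate n hθ0 hθ r
  have hdeg (g : Fin s → ℂ) :
      (uHat s n θ g).natDegree ≤ s - 1 ∧ (uTilde s θ g).natDegree ≤ s - 1 := by
    rw [uHat_eq_sum, uTilde_eq_sum]
    exact ⟨natDegree_sum_C_mul_le (fun l => natDegree_C_mul_tPoly_le _ l) g,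
      natDegree_sum_C_mul_le natDegree_neg_tPoly_le g⟩
  refine ⟨g, resultant_ne_zero_of_forall_not_isRoot (hdeg g).1 (hdeg g).2 ?_ fun z => ?_⟩
  · simpa [hg] using hcoeff
  · simpa [hĝ, hg] using hroot z

end

theorem uHat_uTilde_common_roots_general (s n : ℕ) (θ : Fin s → ℂ)
    (hθ0 : ∀ l, θ l ≠ 0) (hθinj : Function.Injective θ) :
    ((∀ c : ℂ, (∀ l, θ l ^ n = c) →
        ∀ g : Fin s → ℂ,
          uHat s n θ g = Polynomial.C (-c) * uTilde s θ g ∧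
          (uHat s n θ g ≠ 0 → (uHat s n θ g).roots = (uTilde s θ g).roots)) ∧
     ((∃ k k' : Fin s, θ k ^ n ≠ θ k' ^ n) →
        volume {g : Fin s → ℂ |
          ∃ z : ℂ, (uHat s n θ g).IsRoot z ∧ (uTilde s θ g).IsRoot z} = 0)) := by
  refine ⟨fun c hc g => ?_, fun ⟨k, k', hk⟩ => ?_⟩
  · have h : uHat s n θ g = C (-c) * uTilde s θ g := by
      simp only [uHat, uTilde, hc, map_neg, neg_mul_neg, mul_sum, ← mul_assoc, ← C_mul,
        mul_comm c]
    refine ⟨h, fun hne => ?_⟩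
    rw [h, roots_C_mul _ fun hc0 => hne (by rw [h, hc0, C_0, zero_mul])]
  · have hN : s - 1 ≠ 0 := by
      have : (k : ℕ) ≠ k' := Fin.val_ne_of_ne fun h => hk (h ▸ rfl)
      omega
    obtain ⟨g₀, hg₀⟩ := exists_resultant_uHat_uTilde_ne_zero hθ0 hθinj hk
    rw [uHat_eq_sum, uTilde_eq_sum] at hg₀
    simp only [uHat_eq_sum, uTilde_eq_sum]
    rw [volume_pi]
    exact measure_pi_setOf_exists_common_root_eq_zero volume hN
      (fun l => natDegree_C_mul_tPoly_le _ l) natDegree_neg_tPoly_le hg₀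

/-- (i) if `θ_l^n = c` for all `l`, then `û = −c·ũ` for every `g`, so `û` and `ũ`
have exactly the same roots whenever they are nonzero; (ii) if the `θ_l^n` are not all equal,
then the set of `g ∈ ℂ^s` for which `û` and `ũ` have a common root has Lebesgue measure zero. -/
theorem uHat_uTilde_common_roots (s n : ℕ) (hs : 1 ≤ s) (hn : 1 ≤ n) (θ : Fin s → ℂ)
    (hθ0 : ∀ l, θ l ≠ 0) (hθinj : Function.Injective θ) :
    ((∀ c : ℂ, (∀ l, θ l ^ n = c) →
        ∀ g : Fin s → ℂ,
          uHat s n θ g = Polynomial.C (-c) * uTilde s θ g ∧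
          (uHat s n θ g ≠ 0 → (uHat s n θ g).roots = (uTilde s θ g).roots)) ∧
     ((∃ k k' : Fin s, θ k ^ n ≠ θ k' ^ n) →
        volume {g : Fin s → ℂ |
          ∃ z : ℂ, (uHat s n θ g).IsRoot z ∧ (uTilde s θ g).IsRoot z} = 0)) :=
  uHat_uTilde_common_roots_general s n θ hθ0 hθinj
end

section
/- Fix integers s ≥ 1, n ≥ 1, m ≥ 1 and z ∈ ℂ^m. Suppose that recovery from the measurements is unique in the following sense: whenever θ, θ′ ∈ ℂ^s both have nonzero pairwise-distinct entries, g, g′ ∈ ℂ^s both have all entries nonzero, and V_n(z)^T V_n(θ) g = V_n(z)^T V_n(θ′) g′, the multiset of pairs {(θ_l, g_l) : 0 ≤ l ≤ s−1} equals the multiset {(θ′_l, g′_l) : 0 ≤ l ≤ s−1}. Then necessarily n ≥ 2s and m ≥ 2s. -/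
open Matrix Finset

/-- The `n × k` Vandermonde matrix with `(j,l)` entry `w_l^j`. -/
noncomputable def vand (n k : ℕ) (w : Fin k → ℂ) : Matrix (Fin n) (Fin k) ℂ :=
  Matrix.of fun j l => w l ^ (j : ℕ)

/-!
Put `f t := V_n(z)ᵀ (t ^ j)ⱼ`, so that a configuration `(θ, g)` is measured as
`∑ₗ gₗ • f θₗ`, the image of the spike signal `∑ₗ gₗ δ_{θₗ} : ℂ →₀ ℂ` under
`linearCombination ℂ f`. Uniqueness of recovery says that this linear map is injective on
signals with exactly `s` spikes at nonzero nodes. If its target has dimension `< 2s`, the values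
of `f` at `2s` nonzero nodes are dependent, which gives a nonzero signal `c` with at most `2s`
spikes in the kernel. But every such `c` is a difference of two `s`-spike signals: cover its
support by two sets of size `s` whose symmetric difference lies in the support. This gives
`2s ≤ m`, and `2s ≤ n` follows in the same way from the moment curve `t ↦ (t ^ j)ⱼ`, through
which `f` factors.
-/

open Function Finsupp

theorem Infinite.exists_superset_card_eq_notMem {α : Type*} [DecidableEq α] [Infinite α]
    {S : Finset α} {a : α} {n : ℕ} (ha : a ∉ S) (hS : #S ≤ n) :
    ∃ U, S ⊆ U ∧ #U = n ∧ a ∉ U := by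
  obtain ⟨t, hSt, ht⟩ := Infinite.exists_superset_card_eq (insert a S) (n + 1)
    (by rw [card_insert_of_notMem ha]; omega)
  refine ⟨t.erase a, fun x hx => mem_erase.2 ⟨?_, hSt (mem_insert_of_mem hx)⟩, ?_,
    notMem_erase a t⟩
  · rintro rfl; exact ha hx
  · rw [card_erase_of_mem (hSt (mem_insert_self a S)), ht, Nat.add_sub_cancel]

theorem Finset.exists_pair_card_eq_of_card_le_two_mul {α : Type*} [DecidableEq α] [Infinite α]
    {S : Finset α} {a : α} {s : ℕ} (ha : a ∉ S) (hS : #S ≤ 2 * s) :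
    ∃ U₁ U₂ : Finset α, #U₁ = s ∧ #U₂ = s ∧ a ∉ U₁ ∧ a ∉ U₂ ∧
      U₁ \ U₂ ⊆ S ∧ U₂ \ U₁ ⊆ S ∧ S ⊆ U₁ ∪ U₂ := by
  rcases le_or_gt #S s with hSs | hsS
  · obtain ⟨U, hSU, hU, haU⟩ := Infinite.exists_superset_card_eq_notMem ha hSs
    exact ⟨U, U, hU, hU, haU, haU, by simp, by simp, subset_union_left.trans' hSU⟩
  · obtain ⟨U₁, hU₁S, hU₁⟩ := exists_subset_card_eq hsS.le
    obtain ⟨X, hXU₁, hX⟩ := exists_subset_card_eq (s := U₁) (n := 2 * s - #S) (by omega)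
    have hU₂S : S \ U₁ ∪ X ⊆ S := union_subset sdiff_subset (hXU₁.trans hU₁S)
    have hdisj : Disjoint (S \ U₁) X := disjoint_sdiff_self_left.mono_right hXU₁
    refine ⟨U₁, S \ U₁ ∪ X, hU₁, ?_, fun h => ha (hU₁S h), fun h => ha (hU₂S h),
      sdiff_subset.trans hU₁S, sdiff_subset.trans hU₂S, ?_⟩
    · rw [card_union_of_disjoint hdisj, card_sdiff_of_subset hU₁S]; omega
    · intro x hx
      by_cases h : x ∈ U₁ <;> simp [h, hx]

theorem Finsupp.exists_support_eq_and_support_add_eq {α K : Type*} [DecidableEq α] [Field K]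
    [CharZero K] (c : α →₀ K) {U₁ U₂ : Finset α} (h₁ : U₁ \ U₂ ⊆ c.support)
    (h₂ : U₂ \ U₁ ⊆ c.support) (hc : c.support ⊆ U₁ ∪ U₂) :
    ∃ ν : α →₀ K, ν.support = U₂ ∧ (ν + c).support = U₁ := by
  classical
  -- on `U₁ ∩ U₂`, `ν x` and `ν x + c x` (which is `1` or `2 * c x`) are both nonzero
  let w : α → K := fun x =>
    if x ∈ U₂ then (if x ∈ U₁ then (if c x = 0 then 1 else c x) else -c x) else 0
  refine ⟨onFinset U₂ w fun x hx => by by_contra h; simp [w, h] at hx, ?_, ?_⟩ <;> ext x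
  all_goals
    have h₁x : x ∈ U₁ → x ∉ U₂ → c x ≠ 0 := fun h h' =>
      mem_support_iff.1 (h₁ (mem_sdiff.2 ⟨h, h'⟩))
    have h₂x : x ∈ U₂ → x ∉ U₁ → c x ≠ 0 := fun h h' =>
      mem_support_iff.1 (h₂ (mem_sdiff.2 ⟨h, h'⟩))
    have hcx : x ∉ U₁ → x ∉ U₂ → c x = 0 := fun h h' => by
      by_contra hne; simpa [h, h'] using hc (mem_support_iff.2 hne)
    by_cases hx₁ : x ∈ U₁ <;> by_cases hx₂ : x ∈ U₂ <;> by_cases hc0 : c x = 0 <;>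
      simp_all [w]

def sparseSignals (K : Type*) [Field K] (s : ℕ) : Set (K →₀ K) :=
  {ν | #ν.support = s ∧ ν 0 = 0}

theorem exists_mem_sparseSignals_add_mem {K : Type*} [Field K] [CharZero K] {s : ℕ}
    {c : K →₀ K} (hc₀ : c 0 = 0) (hc : #c.support ≤ 2 * s) :
    ∃ ν ∈ sparseSignals K s, ν + c ∈ sparseSignals K s := by
  classical
  obtain ⟨U₁, U₂, hU₁, hU₂, h0U₁, h0U₂, h₁, h₂, hcov⟩ :=
    Finset.exists_pair_card_eq_of_card_le_two_mul (notMem_support_iff.2 hc₀) hc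
  obtain ⟨ν, hν, hνc⟩ := c.exists_support_eq_and_support_add_eq h₁ h₂ hcov
  refine ⟨ν, ⟨hν ▸ hU₂, ?_⟩, hνc ▸ hU₁, ?_⟩
  · exact notMem_support_iff.1 (hν ▸ h0U₂)
  · exact notMem_support_iff.1 (hνc ▸ h0U₁)

theorem Finsupp.exists_injective_sum_single_eq {α M : Type*} [AddCommMonoid M] (ν : α →₀ M)
    {s : ℕ} (hs : #ν.support = s) :
    ∃ θ : Fin s → α, Injective θ ∧ (∀ l, θ l ∈ ν.support) ∧
      ∑ l, single (θ l) (ν (θ l)) = ν := by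
  let e := (equivFinOfCardEq hs).symm
  refine ⟨fun l => e l, Subtype.val_injective.comp e.injective, fun l => (e l).2, ?_⟩
  rw [e.sum_comp (fun x => single (x : α) (ν x)),
    sum_coe_sort ν.support fun x => single x (ν x)]
  exact ν.sum_single

theorem sum_single_eq_of_map_eq {α M : Type*} [AddCommMonoid M] {s : ℕ} {θ θ' : Fin s → α}
    {g g' : Fin s → M}
    (h : (univ.val.map fun l => (θ l, g l)) = (univ.val.map fun l => (θ' l, g' l))) :
    ∑ l, single (θ l) (g l) = ∑ l, single (θ' l) (g' l) := by
  rw [sum_eq_multiset_sum, sum_eq_multiset_sum]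
  simpa only [Multiset.map_map, Function.comp_def] using
    congrArg (fun P => (P.map fun p : α × M => single p.1 p.2).sum) h

theorem injOn_linearCombination_of_unique_recovery {K V : Type*} [Field K] [AddCommGroup V]
    [Module K V] {s : ℕ} (f : K → V)
    (huniq : ∀ θ θ' g g' : Fin s → K,
      (∀ l, θ l ≠ 0) → Injective θ → (∀ l, θ' l ≠ 0) → Injective θ' →
      (∀ l, g l ≠ 0) → (∀ l, g' l ≠ 0) →
      ∑ l, g l • f (θ l) = ∑ l, g' l • f (θ' l) →
      (univ.val.map fun l => (θ l, g l)) = (univ.val.map fun l => (θ' l, g' l))) :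
    Set.InjOn (linearCombination K f) (sparseSignals K s) := by
  rintro ν₁ ⟨hcard₁, h0₁⟩ ν₂ ⟨hcard₂, h0₂⟩ heq
  obtain ⟨θ₁, hinj₁, hmem₁, hsum₁⟩ := ν₁.exists_injective_sum_single_eq hcard₁
  obtain ⟨θ₂, hinj₂, hmem₂, hsum₂⟩ := ν₂.exists_injective_sum_single_eq hcard₂
  have hnode {ν : K →₀ K} (h0 : ν 0 = 0) {x : K} (hx : x ∈ ν.support) : x ≠ 0 :=
    fun hx0 => mem_support_iff.1 hx (hx0 ▸ h0)
  have hlc (ν : K →₀ K) (θ : Fin s → K) :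
      linearCombination K f (∑ l, single (θ l) (ν (θ l))) = ∑ l, ν (θ l) • f (θ l) := by
    simp [map_sum]
  rw [← hsum₁, ← hsum₂]
  refine sum_single_eq_of_map_eq (huniq θ₁ θ₂ _ _ (fun l => hnode h0₁ (hmem₁ l)) hinj₁
    (fun l => hnode h0₂ (hmem₂ l)) hinj₂ (fun l => mem_support_iff.1 (hmem₁ l))
    (fun l => mem_support_iff.1 (hmem₂ l)) ?_)
  rw [← hlc, ← hlc, hsum₁, hsum₂, heq]

theorem two_mul_le_finrank_of_injOn {K V : Type*} [Field K] [CharZero K] [AddCommGroup V]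
    [Module K V] [FiniteDimensional K V] {s : ℕ} {f : K → V}
    (hf : Set.InjOn (linearCombination K f) (sparseSignals K s)) :
    2 * s ≤ Module.finrank K V := by
  classical
  by_contra! hlt
  obtain ⟨T, -, hT, hT0⟩ :=
    Infinite.exists_superset_card_eq_notMem (notMem_empty (0 : K)) (Nat.zero_le (2 * s))
  have hdep : ¬ LinearIndepOn K f (T : Set K) := fun hind => by
    have : #T ≤ Module.finrank K V :=
      (Fintype.card_coe T).symm.trans_le hind.fintype_card_le_finrank
    omega
  obtain ⟨c, hcT, hc, hc0⟩ :
      ∃ c ∈ supported K K (T : Set K), linearCombination K f c = 0 ∧ c ≠ 0 := by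
    simpa [linearIndepOn_iff] using hdep
  have hcT' : c.support ⊆ T := by simpa [mem_supported] using hcT
  obtain ⟨ν, hν, hνc⟩ := exists_mem_sparseSignals_add_mem (s := s)
    (notMem_support_iff.1 fun h => hT0 (hcT' h)) ((card_le_card hcT').trans hT.le)
  exact hc0 (add_eq_left.1 (hf hνc hν (by rw [map_add, hc, add_zero])))

theorem vand_mulVec (n k : ℕ) (w g : Fin k → ℂ) :
    vand n k w *ᵥ g = ∑ l, g l • fun j : Fin n => w l ^ (j : ℕ) := by
  ext j
  simp [vand, mulVec, dotProduct, mul_comm]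

theorem lower_bounds_of_unique_recovery_general (s n m : ℕ)
    (z : Fin m → ℂ)
    (huniq : ∀ θ θ' g g' : Fin s → ℂ,
      (∀ l, θ l ≠ 0) → Function.Injective θ →
      (∀ l, θ' l ≠ 0) → Function.Injective θ' →
      (∀ l, g l ≠ 0) → (∀ l, g' l ≠ 0) →
      ((vand n m z).transpose * vand n s θ).mulVec g =
        ((vand n m z).transpose * vand n s θ').mulVec g' →
      (Finset.univ.val.map fun l : Fin s => (θ l, g l)) =
        (Finset.univ.val.map fun l : Fin s => (θ' l, g' l))) :
    2 * s ≤ n ∧ 2 * s ≤ m := by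
  let v : ℂ → Fin n → ℂ := fun t j => t ^ (j : ℕ)
  let L := (vand n m z).transpose.mulVecLin
  have hmeas (θ g : Fin s → ℂ) :
      ((vand n m z).transpose * vand n s θ) *ᵥ g = ∑ l, g l • (L ∘ v) (θ l) := by
    rw [← mulVec_mulVec, vand_mulVec, mulVec_sum]
    simp only [mulVec_smul]
    rfl
  have hinj : Set.InjOn (linearCombination ℂ (L ∘ v)) (sparseSignals ℂ s) :=
    injOn_linearCombination_of_unique_recovery _ fun θ θ' g g' h₁ h₂ h₃ h₄ h₅ h₆ h =>
      huniq θ θ' g g' h₁ h₂ h₃ h₄ h₅ h₆ (by rw [hmeas, hmeas, h])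
  refine ⟨?_, by simpa using two_mul_le_finrank_of_injOn hinj⟩
  rw [linearCombination_linear_comp, LinearMap.coe_comp] at hinj
  simpa using two_mul_le_finrank_of_injOn hinj.of_comp

/-- if recovery of `(θ, g)` (as a multiset of pairs) from the phase-aware
Vandermonde measurements `V_n(z)^T V_n(θ) g` is unique, then `n ≥ 2s` and `m ≥ 2s`. -/
theorem lower_bounds_of_unique_recovery (s n m : ℕ) (hs : 1 ≤ s) (hn : 1 ≤ n) (hm : 1 ≤ m)
    (z : Fin m → ℂ)
    (huniq : ∀ θ θ' g g' : Fin s → ℂ,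
      (∀ l, θ l ≠ 0) → Function.Injective θ →
      (∀ l, θ' l ≠ 0) → Function.Injective θ' →
      (∀ l, g l ≠ 0) → (∀ l, g' l ≠ 0) →
      ((vand n m z).transpose * vand n s θ).mulVec g =
        ((vand n m z).transpose * vand n s θ').mulVec g' →
      (Finset.univ.val.map fun l : Fin s => (θ l, g l)) =
        (Finset.univ.val.map fun l : Fin s => (θ' l, g' l))) :
    2 * s ≤ n ∧ 2 * s ≤ m :=
  lower_bounds_of_unique_recovery_general s n m z huniq
end

section
/- Let s ≥ 1, n ≥ 2s, γ ∈ ℝ. Let g⁺ ∈ ℂ^s have all entries nonzero, let θ⁺ ∈ ℂ^s have nonzero pairwise-distinct entries with (θ⁺_k)^n ≠ e^{−iγ} for all 0 ≤ k ≤ s−1, and let z_0,…,z_{2s−1} ∈ ℂ be pairwise distinct with z_j^n = e^{iγ} for all j. (Then v⁺(z_j) ≠ 0 for all j, so y_j = u⁺(z_j)/v⁺(z_j) is well defined.) If polynomials v, û, ũ ∈ ℂ[z] with deg v ≤ s, deg û ≤ s−1, deg ũ ≤ s−1 satisfy y_j·v(z_j) − e^{iγ}·û(z_j) − ũ(z_j)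 = 0 for all 0 ≤ j ≤ 2s−1, then there exists c ∈ ℂ such that v(z) = c·v⁺(z) and e^{iγ}·û(z) + ũ(z) = c·(e^{iγ}·û⁺(z) + ũ⁺(z)) identically. -/
open Polynomial Finset Complex

/-- `v(z) = ∏_l (z·θ_l − 1)`. -/
noncomputable def vPoly (s : ℕ) (θ : Fin s → ℂ) : Polynomial ℂ :=
  ∏ l : Fin s, (Polynomial.C (θ l) * Polynomial.X - 1)

/-- `u(z) = z^n·û(z) + ũ(z)`. -/
noncomputable def uPoly (s n : ℕ) (θ g : Fin s → ℂ) : Polynomial ℂ :=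
  Polynomial.X ^ n * uHat s n θ g + uTilde s θ g

/-- Theorem `thm:2k_dft`: with `2s` pairwise distinct shifted-harmonic samples
(`z_j^n = e^{iγ}`), any polynomials `v, û, ũ` of degrees `≤ s, ≤ s−1, ≤ s−1` satisfying
`y_j v(z_j) − e^{iγ} û(z_j) − ũ(z_j) = 0` must satisfy `v = c v⁺` and
`e^{iγ} û + ũ = c (e^{iγ} û⁺ + ũ⁺)` for some `c ∈ ℂ`. -/
theorem shifted_harmonic_recovery (s n : ℕ) (hs : 1 ≤ s) (hn : 2 * s ≤ n) (γ : ℝ)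
    (gp θp : Fin s → ℂ)
    (hgp : ∀ l, gp l ≠ 0)
    (hθ0 : ∀ l, θp l ≠ 0) (hθinj : Function.Injective θp)
    (hθn : ∀ k, θp k ^ n ≠ Complex.exp (-(γ : ℂ) * Complex.I))
    (z : Fin (2 * s) → ℂ) (hzinj : Function.Injective z)
    (hzn : ∀ j, z j ^ n = Complex.exp ((γ : ℂ) * Complex.I))
    (y : Fin (2 * s) → ℂ)
    (hy : ∀ j, y j = (uPoly s n θp gp).eval (z j) / (vPoly s θp).eval (z j))
    (v uh ut : Polynomial ℂ)
    (hv : v.degree ≤ (s : ℕ)) (huh : uh.degree ≤ ((s - 1 : ℕ) : ℕ))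
    (hut : ut.degree ≤ ((s - 1 : ℕ) : ℕ))
    (heq : ∀ j, y j * v.eval (z j)
        - Complex.exp ((γ : ℂ) * Complex.I) * uh.eval (z j) - ut.eval (z j) = 0) :
    ∃ c : ℂ, v = Polynomial.C c * vPoly s θp ∧
      Polynomial.C (Complex.exp ((γ : ℂ) * Complex.I)) * uh + ut =
        Polynomial.C c *
          (Polynomial.C (Complex.exp ((γ : ℂ) * Complex.I)) * uHat s n θp gp
            + uTilde s θp gp) := by

  classical
  set e : ℂ := Complex.exp ((γ : ℂ) * Complex.I) with he
  have he0 : e ≠ 0 := Complex.exp_ne_zero _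
  have heinv : e⁻¹ = Complex.exp (-(γ : ℂ) * Complex.I) := by
    rw [he, ← Complex.exp_neg, neg_mul]
  -- basic degree facts
  have htdeg : ∀ l, (tPoly s θp l).natDegree ≤ s - 1 := by
    intro l
    calc (tPoly s θp l).natDegree ≤ ∑ i ∈ Finset.univ.erase l, (C (θp i) * X - 1 : ℂ[X]).natDegree :=
          Polynomial.natDegree_prod_le _ _
      _ ≤ ∑ i ∈ Finset.univ.erase l, 1 := by
          apply Finset.sum_le_sum
          intro i _
          compute_degree
      _ = s - 1 := by simp [Finset.card_erase_of_mem]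
  have huhatdeg : (uHat s n θp gp).natDegree ≤ s - 1 := by
    refine (Polynomial.natDegree_sum_le _ _).trans ((Finset.fold_max_le _).2
      ⟨Nat.zero_le _, fun l _ => (Polynomial.natDegree_C_mul_le _ _).trans (htdeg l)⟩)
  have hutildeg : (uTilde s θp gp).natDegree ≤ s - 1 := by
    rw [uTilde, natDegree_neg]
    refine (Polynomial.natDegree_sum_le _ _).trans ((Finset.fold_max_le _).2
      ⟨Nat.zero_le _, fun l _ => (Polynomial.natDegree_C_mul_le _ _).trans (htdeg l)⟩)
  have hvpdeg : (vPoly s θp).natDegree ≤ s := by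
    calc (vPoly s θp).natDegree ≤ ∑ l : Fin s, (C (θp l) * X - 1 : ℂ[X]).natDegree :=
          Polynomial.natDegree_prod_le _ _
      _ ≤ ∑ l : Fin s, 1 := by
          apply Finset.sum_le_sum
          intro i _
          compute_degree
      _ = s := by simp
  -- vPoly in factored form
  have hprodθ : (∏ l, θp l) ≠ 0 := Finset.prod_ne_zero_iff.2 fun l _ => hθ0 l
  have hvform : vPoly s θp = C (∏ l, θp l) * ∏ l, (X - C (θp l)⁻¹) := by
    rw [vPoly, map_prod, ← Finset.prod_mul_distrib]
    apply Finset.prod_congr rfl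
    intro l _
    rw [mul_sub, ← C_mul, mul_inv_cancel₀ (hθ0 l), C_1]
  have hmon : (∏ l, (X - C (θp l)⁻¹) : ℂ[X]).Monic :=
    monic_prod_of_monic _ _ fun _ _ => monic_X_sub_C _
  have hdegm : (∏ l, (X - C (θp l)⁻¹) : ℂ[X]).natDegree = s := by
    rw [Polynomial.natDegree_prod _ _ fun l _ => X_sub_C_ne_zero _]
    simp
  have hvcoeff : (vPoly s θp).coeff s = ∏ l, θp l := by
    have h1 := hmon.coeff_natDegree
    rw [hdegm] at h1
    rw [hvform, coeff_C_mul, h1, mul_one]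
  have hvp0 : vPoly s θp ≠ 0 := by
    rw [hvform]
    exact mul_ne_zero (Polynomial.C_ne_zero.2 hprodθ) hmon.ne_zero
  -- eval facts for tPoly
  have htval : ∀ k l : Fin s, k ≠ l → (tPoly s θp l).eval (θp k)⁻¹ = 0 := by
    intro k l hkl
    rw [tPoly, eval_prod]
    apply Finset.prod_eq_zero (Finset.mem_erase.2 ⟨hkl, Finset.mem_univ k⟩)
    simp [mul_inv_cancel₀ (hθ0 k)]
  have htkk : ∀ k : Fin s, (tPoly s θp k).eval (θp k)⁻¹ ≠ 0 := by
    intro k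
    rw [tPoly, eval_prod]
    apply Finset.prod_ne_zero_iff.2
    intro i hi
    simp only [eval_sub, eval_mul, eval_C, eval_X, eval_one]
    intro h
    rw [sub_eq_zero] at h
    exact (Finset.mem_erase.1 hi).1 (hθinj ((mul_inv_eq_one₀ (hθ0 k)).1 h))
  -- vPoly vanishes at the (θp k)⁻¹
  have hvpval : ∀ k : Fin s, (vPoly s θp).eval (θp k)⁻¹ = 0 := by
    intro k
    rw [vPoly, eval_prod]
    apply Finset.prod_eq_zero (Finset.mem_univ k)
    simp [mul_inv_cancel₀ (hθ0 k)]
  -- vPoly nonzero at sample points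
  have hvpz : ∀ j, (vPoly s θp).eval (z j) ≠ 0 := by
    intro j h
    rw [vPoly, eval_prod] at h
    obtain ⟨l, -, hl⟩ := Finset.prod_eq_zero_iff.1 h
    simp only [eval_sub, eval_mul, eval_C, eval_X, eval_one, sub_eq_zero] at hl
    have hz : z j = (θp l)⁻¹ := eq_inv_of_mul_eq_one_right hl
    apply hθn l
    rw [← heinv]
    have h2 : (θp l ^ n)⁻¹ = e := by rw [← inv_pow, ← hz, hzn j]
    rw [← h2, inv_inv]
  -- the two linear combinations
  set W : ℂ[X] := C e * uh + ut with hW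
  set Wp : ℂ[X] := C e * uHat s n θp gp + uTilde s θp gp with hWp
  have hWdeg : W.natDegree ≤ s - 1 := by
    apply (natDegree_add_le _ _).trans
    apply max_le
    · exact (Polynomial.natDegree_C_mul_le _ _).trans
        (natDegree_le_iff_degree_le.2 huh)
    · exact natDegree_le_iff_degree_le.2 hut
  have hWpdeg : Wp.natDegree ≤ s - 1 := by
    apply (natDegree_add_le _ _).trans
    apply max_le
    · exact (Polynomial.natDegree_C_mul_le _ _).trans huhatdeg
    · exact hutildeg
  have hvdeg : v.natDegree ≤ s := natDegree_le_iff_degree_le.2 hv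
  -- Wp evaluated at (θp k)⁻¹
  have hWpval : ∀ k : Fin s, Wp.eval (θp k)⁻¹ =
      gp k * (tPoly s θp k).eval (θp k)⁻¹ * (e * θp k ^ n - 1) := by
    intro k
    rw [hWp]
    simp only [eval_add, eval_mul, eval_C, uHat, uTilde, eval_neg, eval_finset_sum]
    rw [Finset.sum_eq_single k, Finset.sum_eq_single k]
    · ring
    · intro l _ hlk
      simp [htval k l (Ne.symm hlk)]
    · simp
    · intro l _ hlk
      simp [htval k l (Ne.symm hlk)]
    · simp
  have hWpne : ∀ k : Fin s, Wp.eval (θp k)⁻¹ ≠ 0 := by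
    intro k
    rw [hWpval k]
    apply mul_ne_zero (mul_ne_zero (hgp k) (htkk k))
    intro h
    rw [sub_eq_zero] at h
    apply hθn k
    rw [← heinv]
    exact eq_inv_of_mul_eq_one_right h
  -- the key polynomial identity
  set P : ℂ[X] := Wp * v - vPoly s θp * W with hP
  have hPz : ∀ j, P.eval (z j) = 0 := by
    intro j
    have h1 := heq j
    rw [hy j] at h1
    have h2 : (uPoly s n θp gp).eval (z j) = Wp.eval (z j) := by
      rw [uPoly, hWp]
      simp only [eval_add, eval_mul, eval_pow, eval_X, eval_C, hzn j, he]
    rw [hP]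
    simp only [eval_sub, eval_mul]
    rw [hW]
    simp only [eval_add, eval_mul, eval_C]
    rw [← h2]
    have hv0 := hvpz j
    field_simp at h1
    linear_combination h1
  have hPdeg : P.natDegree < 2 * s := by
    have h1 : (Wp * v).natDegree ≤ 2 * s - 1 := by
      apply (natDegree_mul_le).trans
      omega
    have h2 : (vPoly s θp * W).natDegree ≤ 2 * s - 1 := by
      apply (natDegree_mul_le).trans
      omega
    have h3 := (natDegree_sub_le (Wp * v) (vPoly s θp * W)).trans (max_le h1 h2)
    rw [hP]
    omega
  have hP0 : P = 0 := by
    apply Polynomial.eq_zero_of_natDegree_lt_card_of_eval_eq_zero P hzinj hPz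
    simpa using hPdeg
  have hkey : Wp * v = vPoly s θp * W := by
    have h := hP0
    rw [hP] at h
    exact sub_eq_zero.1 h
  -- v vanishes at (θp k)⁻¹
  have hvval : ∀ k : Fin s, v.eval (θp k)⁻¹ = 0 := by
    intro k
    have h := congrArg (Polynomial.eval (θp k)⁻¹) hkey
    simp only [eval_mul] at h
    rw [hvpval k, zero_mul] at h
    exact (mul_eq_zero.1 h).resolve_left (hWpne k)
  -- determine v
  set c : ℂ := v.coeff s / ∏ l, θp l with hc
  set Q : ℂ[X] := v - C c * vPoly s θp with hQ
  have hQcoeff : Q.coeff s = 0 := by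
    rw [hQ]
    simp only [coeff_sub, coeff_C_mul, hvcoeff, hc]
    rw [div_mul_cancel₀ _ hprodθ, sub_self]
  have hQval : ∀ k : Fin s, Q.eval (θp k)⁻¹ = 0 := by
    intro k
    rw [hQ]
    simp [hvval k, hvpval k]
  have hQ0 : Q = 0 := by
    by_cases h0 : Q = 0
    · exact h0
    have hQdeg : Q.natDegree ≤ s := by
      apply (natDegree_sub_le _ _).trans
      apply max_le hvdeg
      exact (Polynomial.natDegree_C_mul_le _ _).trans hvpdeg
    have hne : Q.natDegree ≠ s := by
      intro h
      apply h0
      have := Polynomial.leadingCoeff_ne_zero.2 h0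
      rw [leadingCoeff, h, hQcoeff] at this
      exact absurd rfl this
    have hlt : Q.natDegree < s := lt_of_le_of_ne hQdeg hne
    apply Polynomial.eq_zero_of_natDegree_lt_card_of_eval_eq_zero Q
      (inv_injective.comp hθinj) hQval
    simpa using hlt
  have hveq : v = C c * vPoly s θp := by
    have h := hQ0
    rw [hQ] at h
    exact sub_eq_zero.1 h
  refine ⟨c, hveq, ?_⟩
  have hWeq : W = C c * Wp := by
    apply mul_left_cancel₀ hvp0
    rw [← hkey, hveq]
    ring
  exact hWeq
end

section
/- Let s ≥ 1, n ≥ 2s, γ ∈ ℝ. Let θ⁺ ∈ ℂ^s have nonzero pairwise-distinct entries with (θ⁺_k)^n ≠ e^{−iγ} for all k, and let z = (z_0,…,z_{2s−1}) ∈ ℂ^{2s} be pairwise distinct with z_j^n = e^{iγ} for all j. Then the 2s × s matrix V_n(z)^T V_n(θ⁺) has trivial kernel; consequently, for any g⁺ ∈ ℂ^s, the unique g ∈ ℂ^s satisfying V_n(z)^T V_n(θ⁺) g = V_n(z)^T V_n(θ⁺) g⁺ is g = g⁺. -/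
/-!
Summing the geometric series, `(V_n(z)ᵀ V_n(θ))_{jl} = ((z_j θ_l)ⁿ - 1) / (z_j θ_l - 1)`, and since
`z_jⁿ = e^{iγ}` the numerator depends on `l` only. Hence `V_n(z)ᵀ V_n(θ)` is the Cauchy matrix
`((z_j - θ_l⁻¹)⁻¹)` times an invertible diagonal matrix. A Cauchy matrix with at least as many
distinct row nodes as columns is injective: a kernel vector yields, via the barycentric form of
Lagrange interpolation, a polynomial of degree `< s` vanishing at `≥ s` distinct points.
-/

open Matrix Complex

open Polynomial Lagrange Finset

noncomputable def cauchy {κ ι F : Type*} [Field F] (x : κ → F) (y : ι → F) : Matrix κ ι F :=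
  of fun j i => (x j - y i)⁻¹

theorem cauchy_mulVec_injective {κ ι F : Type*} [Field F] [Fintype κ] [Fintype ι]
    {x : κ → F} {y : ι → F} (hx : Function.Injective x) (hy : Function.Injective y)
    (hxy : ∀ j i, x j ≠ y i) (hcard : Fintype.card ι ≤ Fintype.card κ) :
    Function.Injective (cauchy x y).mulVec := by
  classical
  refine (injective_iff_map_eq_zero (cauchy x y).mulVecLin).mpr fun h hh => ?_
  -- First barycentric formula: `(nodal univ y).eval (x j) * (cauchy x y *ᵥ h) j` is the
  -- interpolant of `h / nodalWeight` at the nodes `y`, evaluated at `x j`.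
  set r : ι → F := fun i => h i / nodalWeight univ y i
  have hr : ∀ i, h i = nodalWeight univ y i * r i := fun i =>
    (mul_div_cancel₀ _ (nodalWeight_ne_zero hy.injOn (mem_univ i))).symm
  have hP : interpolate univ y r = 0 := by
    refine eq_zero_of_degree_lt_of_eval_index_eq_zero (s := univ) hx.injOn
      ((degree_interpolate_lt r hy.injOn).trans_le (by simpa using hcard)) fun j _ => ?_
    have hj : ∑ i, nodalWeight univ y i * (x j - y i)⁻¹ * r i = 0 := by
      simpa only [mulVecLin_apply, mulVec, dotProduct, cauchy, of_apply, hr, Pi.zero_apply,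
        mul_left_comm, mul_assoc] using congrFun hh j
    rw [eval_interpolate_not_at_node r fun i _ => hxy j i, hj, mul_zero]
  funext i
  rw [hr i, ← eval_interpolate_at_node r hy.injOn (mem_univ i), hP, eval_zero, mul_zero,
    Pi.zero_apply]

theorem vand_transpose_mul_vand_apply {n k s : ℕ} (z : Fin k → ℂ) (θ : Fin s → ℂ) (j : Fin k)
    (l : Fin s) : ((vand n k z)ᵀ * vand n s θ) j l = ∑ m ∈ range n, (z j * θ l) ^ m := by
  simp only [mul_apply, transpose_apply, vand, of_apply, ← mul_pow]
  exact Fin.sum_univ_eq_sum_range (fun m => (z j * θ l) ^ m) n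

theorem vand_transpose_mul_vand_eq_cauchy_mul_diagonal {n k s : ℕ} {ζ : ℂ} {z : Fin k → ℂ}
    {θ : Fin s → ℂ} (hz : ∀ j, z j ^ n = ζ) (hθ : ∀ l, θ l ≠ 0) (hzθ : ∀ j l, z j * θ l ≠ 1) :
    (vand n k z)ᵀ * vand n s θ =
      cauchy z (fun l => (θ l)⁻¹) * diagonal fun l => (ζ * θ l ^ n - 1) / θ l := by
  ext j l
  have hfac : z j * θ l - 1 = θ l * (z j - (θ l)⁻¹) := by field_simp [hθ l]
  rw [vand_transpose_mul_vand_apply, geom_sum_eq (hzθ j l), mul_diagonal, cauchy, of_apply,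
    mul_pow, hz, hfac, div_mul_eq_div_div, div_eq_inv_mul]

theorem vand_transpose_mul_vand_mulVec_injective {n k s : ℕ} {ζ : ℂ} {z : Fin k → ℂ}
    {θ : Fin s → ℂ} (hsk : s ≤ k) (hz : Function.Injective z) (hzn : ∀ j, z j ^ n = ζ)
    (hθ : Function.Injective θ) (hθ0 : ∀ l, θ l ≠ 0) (hθn : ∀ l, ζ * θ l ^ n ≠ 1) :
    Function.Injective ((vand n k z)ᵀ * vand n s θ).mulVec := by
  have hzθ : ∀ j l, z j * θ l ≠ 1 := fun j l h => hθn l (by rw [← hzn j, ← mul_pow, h, one_pow])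
  have hcauchy : Function.Injective (cauchy z fun l => (θ l)⁻¹).mulVec := by
    refine cauchy_mulVec_injective hz (inv_injective.comp hθ) (fun j l h => hzθ j l ?_)
      (by simpa using hsk)
    rw [h, inv_mul_cancel₀ (hθ0 l)]
  have hdiag : Function.Injective (diagonal fun l => (ζ * θ l ^ n - 1) / θ l).mulVec := by
    refine mulVec_injective_of_det_ne_zero ?_
    rw [det_diagonal]
    exact prod_ne_zero_iff.mpr fun l _ => div_ne_zero (sub_ne_zero.mpr (hθn l)) (hθ0 l)
  rw [vand_transpose_mul_vand_eq_cauchy_mul_diagonal hzn hθ0 hzθ]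
  intro v w h
  simp only [← mulVec_mulVec] at h
  exact hdiag (hcauchy h)

theorem vandermonde_product_trivial_kernel_general (s n : ℕ) (γ : ℝ)
    (θp : Fin s → ℂ) (hθ0 : ∀ l, θp l ≠ 0) (hθinj : Function.Injective θp)
    (hθn : ∀ k, θp k ^ n ≠ Complex.exp (-(γ : ℂ) * Complex.I))
    (z : Fin (2 * s) → ℂ) (hzinj : Function.Injective z)
    (hzn : ∀ j, z j ^ n = Complex.exp ((γ : ℂ) * Complex.I)) :
    (∀ g : Fin s → ℂ,
        ((vand n (2 * s) z).transpose * vand n s θp).mulVec g = 0 → g = 0) ∧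
    (∀ gp g : Fin s → ℂ,
        ((vand n (2 * s) z).transpose * vand n s θp).mulVec g =
          ((vand n (2 * s) z).transpose * vand n s θp).mulVec gp → g = gp) := by
  have hθn' : ∀ l, exp (γ * I) * θp l ^ n ≠ 1 := fun l h =>
    hθn l (by rw [neg_mul, exp_neg]; exact eq_inv_of_mul_eq_one_right h)
  have hinj := vand_transpose_mul_vand_mulVec_injective (by omega) hzinj hzn hθinj hθ0 hθn'
  exact ⟨fun g hg => hinj (hg.trans (mulVec_zero _).symm), fun gp g h => hinj h⟩

/-- with `2s` pairwise distinct shifted-harmonic samples and `θ⁺` with nonzero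
pairwise distinct entries satisfying `(θ⁺_k)^n ≠ e^{−iγ}`, the `2s × s` matrix
`V_n(z)^T V_n(θ⁺)` has trivial kernel; hence `g` is uniquely determined by the measurements. -/
theorem vandermonde_product_trivial_kernel (s n : ℕ) (hs : 1 ≤ s) (hn : 2 * s ≤ n) (γ : ℝ)
    (θp : Fin s → ℂ) (hθ0 : ∀ l, θp l ≠ 0) (hθinj : Function.Injective θp)
    (hθn : ∀ k, θp k ^ n ≠ Complex.exp (-(γ : ℂ) * Complex.I))
    (z : Fin (2 * s) → ℂ) (hzinj : Function.Injective z)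
    (hzn : ∀ j, z j ^ n = Complex.exp ((γ : ℂ) * Complex.I)) :
    (∀ g : Fin s → ℂ,
        ((vand n (2 * s) z).transpose * vand n s θp).mulVec g = 0 → g = 0) ∧
    (∀ gp g : Fin s → ℂ,
        ((vand n (2 * s) z).transpose * vand n s θp).mulVec g =
          ((vand n (2 * s) z).transpose * vand n s θp).mulVec gp → g = gp) :=
  vandermonde_product_trivial_kernel_general s n γ θp hθ0 hθinj hθn z hzinj hzn
end

section
/- Let s ≥ 1, n ≥ 1, let θ ∈ 𝕋^s have pairwise distinct entries, and let g ∈ ℂ^s. Then for every z ∈ 𝕋 with v(z) ≠ 0, |u(z)/v(z)|² = (L(z) + z^n·L̃(z) + z^{−n}·conj(L̃(z))) / L̂(z), where L = û·û* + ũ·ũ*, L̃ = û·ũ*, and L̂ = v·v*. In particular, the squared-magnitude measurement |u(z)/v(z)|² is, on 𝕋, a ratio of Laurent polynomials of degree at most s in z and 1/z. -/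
open Polynomial Finset Complex

open ComplexConjugate in
theorem normSq_pow_mul_add_of_norm_eq_one {z : ℂ} (hz : ‖z‖ = 1) (n : ℕ) (a b : ℂ) :
    (normSq (z ^ n * a + b) : ℂ) =
      a * conj a + b * conj b + z ^ (n : ℤ) * (a * conj b) + z ^ (-(n : ℤ)) * conj (a * conj b) := by
  have hz₀ : z ≠ 0 := norm_ne_zero_iff.mp (hz ▸ one_ne_zero)
  rw [← mul_conj, map_add, map_mul, map_pow, map_mul, conj_conj, ← inv_eq_conj hz,
    zpow_neg, zpow_natCast, inv_pow]
  field_simp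
  ring

theorem squared_measurement_laurent_general (s n : ℕ)
    (θ : Fin s → ℂ)
    (g : Fin s → ℂ) :
    ∀ z : ℂ, ‖z‖ = 1 → (vPoly s θ).eval z ≠ 0 →
      ((Complex.normSq ((uPoly s n θ g).eval z / (vPoly s θ).eval z) : ℝ) : ℂ) =
        (((uHat s n θ g).eval z * (starRingEnd ℂ) ((uHat s n θ g).eval z)
            + (uTilde s θ g).eval z * (starRingEnd ℂ) ((uTilde s θ g).eval z))
          + z ^ (n : ℤ) * ((uHat s n θ g).eval z * (starRingEnd ℂ) ((uTilde s θ g).eval z))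
          + z ^ (-(n : ℤ)) *
              (starRingEnd ℂ) ((uHat s n θ g).eval z * (starRingEnd ℂ) ((uTilde s θ g).eval z)))
        / ((vPoly s θ).eval z * (starRingEnd ℂ) ((vPoly s θ).eval z)) := by
  intro z hz _
  have hu : (uPoly s n θ g).eval z = z ^ n * (uHat s n θ g).eval z + (uTilde s θ g).eval z := by
    simp [uPoly]
  rw [normSq_div, ofReal_div, hu, normSq_pow_mul_add_of_norm_eq_one hz, ← mul_conj]

/-- on the unit circle `𝕋`, wherever `v(z) ≠ 0`,
`|u(z)/v(z)|² = (L(z) + z^n L̃(z) + z^{−n} conj(L̃(z))) / L̂(z)`, where on `𝕋`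
`L(z) = û(z)·conj(û(z)) + ũ(z)·conj(ũ(z))`, `L̃(z) = û(z)·conj(ũ(z))` and
`L̂(z) = v(z)·conj(v(z))`. -/
theorem squared_measurement_laurent (s n : ℕ) (hs : 1 ≤ s) (hn : 1 ≤ n)
    (θ : Fin s → ℂ) (hθT : ∀ l, ‖θ l‖ = 1) (hθinj : Function.Injective θ)
    (g : Fin s → ℂ) :
    ∀ z : ℂ, ‖z‖ = 1 → (vPoly s θ).eval z ≠ 0 →
      ((Complex.normSq ((uPoly s n θ g).eval z / (vPoly s θ).eval z) : ℝ) : ℂ) =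
        (((uHat s n θ g).eval z * (starRingEnd ℂ) ((uHat s n θ g).eval z)
            + (uTilde s θ g).eval z * (starRingEnd ℂ) ((uTilde s θ g).eval z))
          + z ^ (n : ℤ) * ((uHat s n θ g).eval z * (starRingEnd ℂ) ((uTilde s θ g).eval z))
          + z ^ (-(n : ℤ)) *
              (starRingEnd ℂ) ((uHat s n θ g).eval z * (starRingEnd ℂ) ((uTilde s θ g).eval z)))
        / ((vPoly s θ).eval z * (starRingEnd ℂ) ((vPoly s θ).eval z)) :=
  squared_measurement_laurent_general s n θ g
end

section
/- Let s ≥ 1, n ≥ 1, let θ ∈ 𝕋^s have pairwise distinct entries, and let g^a ∈ ℂ^s. Define g^b ∈ ℂ^s by g^b_l = conj(g^a_l)·θ_l^{−n}·∏_{0 ≤ i ≤ s−1, i ≠ l} conj(θ_i). Let û^a, ũ^a, u^a and û^b, ũ^b, u^b be the polynomials built from (θ, g^a) and (θ, g^b) respectively. Then for every z ∈ 𝕋: |û^b(z)|² + |ũ^b(z)|² = |û^a(z)|² + |ũ^a(z)|² and û^b(z)·conj(ũ^b(z)) = û^a(z)·conj(ũ^a(z)). In particular |u^b(z)|² = |u^a(z)|²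 for every z ∈ 𝕋, so g^a and g^b produce identical phase-less measurements |V_n(z)^T V_n(θ) g|² for any sample vector z ∈ 𝕋^m. -/
open Polynomial Finset Complex Matrix

/-!
On the unit circle `conj (θ z - 1) = -conj z · conj θ · (θ z - 1)`, so `conj (t_l(z))` is
`t_l(z)` times the unimodular factor `(-conj z)^(s-1) ∏_{i ≠ l} conj θ_i`. The dual vector is
designed to absorb that factor: with `ε = -(-z)^(s-1)` one gets `û^b(z) = ε · conj (ũ^a(z))` and
`ũ^b(z) = ε · conj (û^a(z))`, which gives both identities and `u^b(z) = ε z^n · conj (u^a(z))`.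
The Vandermonde measurements are sums of `g_l · Σ_{k<n} (z θ_l)^k`, and the same mechanism works
because a geometric sum `S` of a unimodular ratio `u` is reflected by conjugation: `u^n conj S = u S`.
-/

open scoped ComplexConjugate

lemma ne_zero_of_norm_eq_one {z : ℂ} (hz : ‖z‖ = 1) : z ≠ 0 :=
  ne_zero_of_norm_ne_zero (by rw [hz]; exact one_ne_zero)

lemma mul_conj_of_norm_eq_one {z : ℂ} (hz : ‖z‖ = 1) : z * conj z = 1 := by
  rw [← inv_eq_conj hz, mul_inv_cancel₀ (ne_zero_of_norm_eq_one hz)]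

lemma normSq_eq_of_eq_mul_conj {a b ε : ℂ} (hε : ‖ε‖ = 1) (h : b = ε * conj a) :
    normSq b = normSq a := by
  rw [h, normSq_mul, normSq_conj, normSq_eq_norm_sq, hε, one_pow, one_mul]

lemma conj_mul_sub_one {a z : ℂ} (ha : ‖a‖ = 1) (hz : ‖z‖ = 1) :
    conj (a * z - 1) = -conj z * conj a * (a * z - 1) := by
  have ha0 := ne_zero_of_norm_eq_one ha
  have hz0 := ne_zero_of_norm_eq_one hz
  rw [map_sub, map_mul, map_one, ← inv_eq_conj ha, ← inv_eq_conj hz]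
  field_simp
  ring

lemma pow_mul_conj_geom_sum {u : ℂ} (hu : ‖u‖ = 1) (n : ℕ) :
    u ^ n * conj (∑ i ∈ range n, u ^ i) = u * ∑ i ∈ range n, u ^ i := by
  induction n with
  | zero => simp
  | succ n ih =>
    have hS : ∑ i ∈ range n, u ^ i + u ^ n = u * ∑ i ∈ range n, u ^ i + 1 :=
      (sum_range_succ _ n).symm.trans geom_sum_succ
    have hun : u ^ n * conj u ^ n = 1 := by rw [← mul_pow, mul_conj_of_norm_eq_one hu, one_pow]
    rw [sum_range_succ, map_add, map_pow]
    linear_combination u * ih + u * hun - u * hS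

lemma dual_pair_identities {a₁ a₂ b₁ b₂ ε : ℂ} (hε : ‖ε‖ = 1) (h₁ : b₁ = ε * conj a₂)
    (h₂ : b₂ = ε * conj a₁) :
    b₁ * conj b₁ + b₂ * conj b₂ = a₁ * conj a₁ + a₂ * conj a₂ ∧ b₁ * conj b₂ = a₁ * conj a₂ := by
  have hεε := mul_conj_of_norm_eq_one hε
  subst h₁ h₂
  simp only [map_mul, conj_conj]
  constructor
  · linear_combination (a₁ * conj a₁ + a₂ * conj a₂) * hεε
  · linear_combination (a₁ * conj a₂) * hεε

/-- The vector `g^b` of the paper, built from `g = g^a`. -/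
noncomputable def dualVec (s n : ℕ) (θ g : Fin s → ℂ) : Fin s → ℂ :=
  fun l => conj (g l) * (θ l ^ n)⁻¹ * ∏ i ∈ univ.erase l, conj (θ i)

section UnitCircle

variable {s : ℕ} {θ : Fin s → ℂ} {z : ℂ}

lemma conj_eval_tPoly (hθ : ∀ i, ‖θ i‖ = 1) (hz : ‖z‖ = 1) (l : Fin s) :
    conj ((tPoly s θ l).eval z) =
      (-conj z) ^ (s - 1) * (∏ i ∈ univ.erase l, conj (θ i)) * (tPoly s θ l).eval z := by
  simp only [tPoly, eval_prod, eval_sub, eval_mul, eval_C, eval_X, eval_one, map_prod]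
  rw [prod_congr rfl fun i _ => conj_mul_sub_one (hθ i) hz, prod_mul_distrib, prod_mul_distrib,
    prod_const, card_erase_of_mem (mem_univ l), card_univ, Fintype.card_fin]

lemma neg_pow_mul_neg_conj_pow (hz : ‖z‖ = 1) (k : ℕ) : (-z) ^ k * (-conj z) ^ k = 1 := by
  rw [← mul_pow, neg_mul_neg, mul_conj_of_norm_eq_one hz, one_pow]

lemma eval_uHat_dualVec (hθ : ∀ i, ‖θ i‖ = 1) (hz : ‖z‖ = 1) (n : ℕ) (g : Fin s → ℂ) :
    (uHat s n θ (dualVec s n θ g)).eval z = -(-z) ^ (s - 1) * conj ((uTilde s θ g).eval z) := by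
  simp only [uHat, uTilde, dualVec, eval_finsetSum, eval_neg, eval_mul, eval_C, map_neg,
    map_sum, map_mul, conj_eval_tPoly hθ hz, mul_sum, ← sum_neg_distrib]
  refine sum_congr rfl fun l _ => ?_
  have hθn : (θ l ^ n)⁻¹ * θ l ^ n = 1 :=
    inv_mul_cancel₀ (pow_ne_zero n (ne_zero_of_norm_eq_one (hθ l)))
  linear_combination (conj (g l) * (∏ i ∈ univ.erase l, conj (θ i)) * (tPoly s θ l).eval z) *
    (hθn - neg_pow_mul_neg_conj_pow hz (s - 1))

lemma eval_uTilde_dualVec (hθ : ∀ i, ‖θ i‖ = 1) (hz : ‖z‖ = 1) (n : ℕ) (g : Fin s → ℂ) :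
    (uTilde s θ (dualVec s n θ g)).eval z = -(-z) ^ (s - 1) * conj ((uHat s n θ g).eval z) := by
  simp only [uHat, uTilde, dualVec, eval_finsetSum, eval_neg, eval_mul, eval_C,
    map_sum, map_mul, conj_eval_tPoly hθ hz, mul_sum, ← sum_neg_distrib]
  refine sum_congr rfl fun l _ => ?_
  rw [← inv_eq_conj (z := θ l ^ n) (by rw [norm_pow, hθ l, one_pow])]
  linear_combination (conj (g l) * (θ l ^ n)⁻¹ * (∏ i ∈ univ.erase l, conj (θ i)) *
    (tPoly s θ l).eval z) * neg_pow_mul_neg_conj_pow hz (s - 1)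

lemma eval_uPoly_dualVec (hθ : ∀ i, ‖θ i‖ = 1) (hz : ‖z‖ = 1) (n : ℕ) (g : Fin s → ℂ) :
    (uPoly s n θ (dualVec s n θ g)).eval z =
      (-(-z) ^ (s - 1) * z ^ n) * conj ((uPoly s n θ g).eval z) := by
  have hzn : z ^ n * conj z ^ n = 1 := by rw [← mul_pow, mul_conj_of_norm_eq_one hz, one_pow]
  simp only [uPoly, eval_add, eval_mul, eval_pow, eval_X, eval_uHat_dualVec hθ hz,
    eval_uTilde_dualVec hθ hz, map_add, map_mul, map_pow]
  linear_combination ((-z) ^ (s - 1) * conj ((uHat s n θ g).eval z)) * hzn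

end UnitCircle

lemma vand_transpose_mul_vand_mulVec_apply {n m s : ℕ} (w : Fin m → ℂ) (θ g : Fin s → ℂ)
    (j : Fin m) :
    (((vand n m w)ᵀ * vand n s θ) *ᵥ g) j = ∑ l, (∑ k ∈ range n, (w j * θ l) ^ k) * g l := by
  simp only [mulVec, dotProduct, mul_apply, transpose_apply, vand, of_apply, ← mul_pow]
  rw [sum_congr rfl fun l _ => by rw [Fin.sum_univ_eq_sum_range (fun k => (w j * θ l) ^ k) n]]

lemma vand_mulVec_dualVec {m s : ℕ} {θ : Fin s → ℂ} (hθ : ∀ i, ‖θ i‖ = 1) (w : Fin m → ℂ)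
    {j : Fin m} (hw : ‖w j‖ = 1) (n : ℕ) (g : Fin s → ℂ) :
    (((vand n m w)ᵀ * vand n s θ) *ᵥ dualVec s n θ g) j =
      (w j ^ n * conj (w j) * ∏ i, conj (θ i)) * conj ((((vand n m w)ᵀ * vand n s θ) *ᵥ g) j) := by
  rw [vand_transpose_mul_vand_mulVec_apply, vand_transpose_mul_vand_mulVec_apply, map_sum,
    mul_sum]
  refine sum_congr rfl fun l _ => ?_
  have hu : ‖w j * θ l‖ = 1 := by rw [norm_mul, hw, hθ l, one_mul]
  have hS := pow_mul_conj_geom_sum hu n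
  rw [mul_comm, ← eq_div_iff (pow_ne_zero n (ne_zero_of_norm_eq_one hu))] at hS
  rw [dualVec, map_mul, hS, ← mul_prod_erase univ (fun i => conj (θ i)) (mem_univ l),
    ← inv_eq_conj hw, ← inv_eq_conj (hθ l)]
  have hw0 := ne_zero_of_norm_eq_one hw
  have hθ0 := ne_zero_of_norm_eq_one (hθ l)
  field_simp
  ring

theorem dual_solution_same_measurements_general (s n : ℕ)
    (θ : Fin s → ℂ) (hθT : ∀ l, ‖θ l‖ = 1)
    (ga : Fin s → ℂ)
    (gb : Fin s → ℂ)
    (hgb : ∀ l, gb l = (starRingEnd ℂ) (ga l) * (θ l ^ n)⁻¹ *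
      ∏ i ∈ Finset.univ.erase l, (starRingEnd ℂ) (θ i)) :
    (∀ z : ℂ, ‖z‖ = 1 →
      ((uHat s n θ gb).eval z * (starRingEnd ℂ) ((uHat s n θ gb).eval z)
          + (uTilde s θ gb).eval z * (starRingEnd ℂ) ((uTilde s θ gb).eval z) =
        (uHat s n θ ga).eval z * (starRingEnd ℂ) ((uHat s n θ ga).eval z)
          + (uTilde s θ ga).eval z * (starRingEnd ℂ) ((uTilde s θ ga).eval z)) ∧
      ((uHat s n θ gb).eval z * (starRingEnd ℂ) ((uTilde s θ gb).eval z) =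
        (uHat s n θ ga).eval z * (starRingEnd ℂ) ((uTilde s θ ga).eval z)) ∧
      Complex.normSq ((uPoly s n θ gb).eval z) =
        Complex.normSq ((uPoly s n θ ga).eval z)) ∧
    (∀ m : ℕ, ∀ zs : Fin m → ℂ, (∀ j, ‖zs j‖ = 1) →
      ∀ j : Fin m,
        Complex.normSq ((((vand n m zs).transpose * vand n s θ).mulVec gb) j) =
          Complex.normSq ((((vand n m zs).transpose * vand n s θ).mulVec ga) j)) := by
  obtain rfl : gb = dualVec s n θ ga := funext hgb
  refine ⟨fun z hz => ?_, fun m zs hzs j => ?_⟩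
  · have hε : ‖-(-z) ^ (s - 1)‖ = 1 := by rw [norm_neg, norm_pow, norm_neg, hz, one_pow]
    obtain ⟨hsum, hprod⟩ :=
      dual_pair_identities hε (eval_uHat_dualVec hθT hz n ga) (eval_uTilde_dualVec hθT hz n ga)
    refine ⟨hsum, hprod, normSq_eq_of_eq_mul_conj ?_ (eval_uPoly_dualVec hθT hz n ga)⟩
    rw [norm_mul, hε, norm_pow, hz, one_pow, one_mul]
  · refine normSq_eq_of_eq_mul_conj ?_ (vand_mulVec_dualVec hθT zs (hzs j) n ga)
    simp [norm_prod, hzs j, hθT]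

/-- Theorem `thm:dual_sol`: the dual vector
`g^b_l = conj(g^a_l)·θ_l^{−n}·∏_{i≠l} conj(θ_i)` produces, on the unit circle, the same
quantities `|û|² + |ũ|²` and `û·conj(ũ)` as `g^a`; in particular `|u^b(z)|² = |u^a(z)|²`
on `𝕋`, so `g^a` and `g^b` give identical phase-less measurements
`|V_n(z)^T V_n(θ) g|²` for any samples on `𝕋`. -/
theorem dual_solution_same_measurements (s n : ℕ) (hs : 1 ≤ s) (hn : 1 ≤ n)
    (θ : Fin s → ℂ) (hθT : ∀ l, ‖θ l‖ = 1) (hθinj : Function.Injective θ)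
    (ga : Fin s → ℂ)
    (gb : Fin s → ℂ)
    (hgb : ∀ l, gb l = (starRingEnd ℂ) (ga l) * (θ l ^ n)⁻¹ *
      ∏ i ∈ Finset.univ.erase l, (starRingEnd ℂ) (θ i)) :
    (∀ z : ℂ, ‖z‖ = 1 →
      ((uHat s n θ gb).eval z * (starRingEnd ℂ) ((uHat s n θ gb).eval z)
          + (uTilde s θ gb).eval z * (starRingEnd ℂ) ((uTilde s θ gb).eval z) =
        (uHat s n θ ga).eval z * (starRingEnd ℂ) ((uHat s n θ ga).eval z)
          + (uTilde s θ ga).eval z * (starRingEnd ℂ) ((uTilde s θ ga).eval z)) ∧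
      ((uHat s n θ gb).eval z * (starRingEnd ℂ) ((uTilde s θ gb).eval z) =
        (uHat s n θ ga).eval z * (starRingEnd ℂ) ((uTilde s θ ga).eval z)) ∧
      Complex.normSq ((uPoly s n θ gb).eval z) =
        Complex.normSq ((uPoly s n θ ga).eval z)) ∧
    (∀ m : ℕ, ∀ zs : Fin m → ℂ, (∀ j, ‖zs j‖ = 1) →
      ∀ j : Fin m,
        Complex.normSq ((((vand n m zs).transpose * vand n s θ).mulVec gb) j) =
          Complex.normSq ((((vand n m zs).transpose * vand n s θ).mulVec ga) j)) :=
  dual_solution_same_measurements_general s n θ hθT ga gb hgb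
end

section
/- Let s ≥ 1, n ≥ 1, γ ∈ ℝ, let θ ∈ 𝕋^s have pairwise distinct entries and let g ∈ ℂ^s. Then for every 0 ≤ k ≤ s−1, the Laurent polynomial M = L + e^{iγ}·L̃ + e^{−iγ}·L̃* satisfies M(conj(θ_k)) = |g_k|² · |t_k(conj(θ_k))|² · |e^{iγ}·θ_k^n − 1|². Consequently, knowledge of θ and of c·M for an unknown real constant c > 0 determines the magnitudes |g_k| up to a common positive real scalar. -/
open Polynomial Finset Complex

/- At `w = conj θ_k` every `t_l` with `l ≠ k` vanishes, so `û(w) = g_k θ_k^n t_k(w)` and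
`ũ(w) = -g_k t_k(w)`. Since `|e^{iγ}| = 1`, `M(w)` is the single square `|e^{iγ} û(w) + ũ(w)|²`,
which factors as `|g_k|² |t_k(w)|² |e^{iγ} θ_k^n - 1|²`. -/

open ComplexConjugate

section EvalAtInverse

variable {s : ℕ} {θ : Fin s → ℂ} {k : Fin s} {w : ℂ}

theorem tPoly_eval_eq_zero_of_mul_eq_one (hw : θ k * w = 1) {l : Fin s} (hl : l ≠ k) :
    (tPoly s θ l).eval w = 0 := by
  rw [tPoly, eval_prod]
  exact prod_eq_zero (mem_erase.mpr ⟨hl.symm, mem_univ k⟩) (by simp [hw])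

theorem uHat_eval_of_mul_eq_one (n : ℕ) (g : Fin s → ℂ) (hw : θ k * w = 1) :
    (uHat s n θ g).eval w = g k * θ k ^ n * (tPoly s θ k).eval w := by
  rw [uHat, eval_finsetSum, sum_eq_single k
    (fun l _ hl => by simp [tPoly_eval_eq_zero_of_mul_eq_one hw hl]) (by simp)]
  simp

theorem uTilde_eval_of_mul_eq_one (g : Fin s → ℂ) (hw : θ k * w = 1) :
    (uTilde s θ g).eval w = -(g k * (tPoly s θ k).eval w) := by
  rw [uTilde, eval_neg, eval_finsetSum, sum_eq_single k
    (fun l _ hl => by simp [tPoly_eval_eq_zero_of_mul_eq_one hw hl]) (by simp)]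
  simp

end EvalAtInverse

theorem mul_conj_add_mul_conj_add_cross_eq_normSq {φ : ℂ} (hφ : ‖φ‖ = 1) (u v : ℂ) :
    u * conj u + v * conj v + φ * (u * conj v) + conj φ * conj (u * conj v) =
      (normSq (φ * u + v) : ℂ) := by
  have hφφ : φ * conj φ = 1 := by simp [mul_conj', hφ]
  rw [← mul_conj]
  simp only [map_mul, map_add, conj_conj]
  linear_combination -(u * conj u) * hφφ

theorem M_at_conj_theta_general (s n : ℕ) (γ : ℝ)
    (θ : Fin s → ℂ) (hθT : ∀ l, ‖θ l‖ = 1)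
    (g : Fin s → ℂ) :
    ∀ k : Fin s,
      ((uHat s n θ g).eval ((starRingEnd ℂ) (θ k)) *
          (starRingEnd ℂ) ((uHat s n θ g).eval ((starRingEnd ℂ) (θ k)))
        + (uTilde s θ g).eval ((starRingEnd ℂ) (θ k)) *
          (starRingEnd ℂ) ((uTilde s θ g).eval ((starRingEnd ℂ) (θ k))))
      + Complex.exp ((γ : ℂ) * Complex.I) *
          ((uHat s n θ g).eval ((starRingEnd ℂ) (θ k)) *
            (starRingEnd ℂ) ((uTilde s θ g).eval ((starRingEnd ℂ) (θ k))))
      + Complex.exp (-(γ : ℂ) * Complex.I) *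
          (starRingEnd ℂ)
            ((uHat s n θ g).eval ((starRingEnd ℂ) (θ k)) *
              (starRingEnd ℂ) ((uTilde s θ g).eval ((starRingEnd ℂ) (θ k)))) =
      ((Complex.normSq (g k) *
          Complex.normSq ((tPoly s θ k).eval ((starRingEnd ℂ) (θ k))) *
          Complex.normSq (Complex.exp ((γ : ℂ) * Complex.I) * θ k ^ n - 1) : ℝ) : ℂ) := by
  intro k
  have hw : θ k * conj (θ k) = 1 := by simp [mul_conj', hθT k]
  have hconj : exp (-(γ : ℂ) * I) = conj (exp ((γ : ℂ) * I)) := by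
    rw [← exp_conj, map_mul, conj_ofReal, conj_I, mul_neg, neg_mul]
  rw [hconj, mul_conj_add_mul_conj_add_cross_eq_normSq (norm_exp_ofReal_mul_I γ),
    uHat_eval_of_mul_eq_one n g hw, uTilde_eval_of_mul_eq_one g hw, ← normSq_mul, ← normSq_mul]
  congr 2
  ring

/-- cf. Proposition `prop:unique_g_abs_4s`: for each `k`, the Laurent
polynomial `M = L + e^{iγ}·L̃ + e^{−iγ}·L̃*` (here evaluated on `𝕋`, where
`L(w) = û(w)conj(û(w)) + ũ(w)conj(ũ(w))` and `L̃(w) = û(w)conj(ũ(w))`) satisfies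
`M(conj θ_k) = |g_k|²·|t_k(conj θ_k)|²·|e^{iγ}θ_k^n − 1|²`. -/
theorem M_at_conj_theta (s n : ℕ) (hs : 1 ≤ s) (hn : 1 ≤ n) (γ : ℝ)
    (θ : Fin s → ℂ) (hθT : ∀ l, ‖θ l‖ = 1) (hθinj : Function.Injective θ)
    (g : Fin s → ℂ) :
    ∀ k : Fin s,
      ((uHat s n θ g).eval ((starRingEnd ℂ) (θ k)) *
          (starRingEnd ℂ) ((uHat s n θ g).eval ((starRingEnd ℂ) (θ k)))
        + (uTilde s θ g).eval ((starRingEnd ℂ) (θ k)) *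
          (starRingEnd ℂ) ((uTilde s θ g).eval ((starRingEnd ℂ) (θ k))))
      + Complex.exp ((γ : ℂ) * Complex.I) *
          ((uHat s n θ g).eval ((starRingEnd ℂ) (θ k)) *
            (starRingEnd ℂ) ((uTilde s θ g).eval ((starRingEnd ℂ) (θ k))))
      + Complex.exp (-(γ : ℂ) * Complex.I) *
          (starRingEnd ℂ)
            ((uHat s n θ g).eval ((starRingEnd ℂ) (θ k)) *
              (starRingEnd ℂ) ((uTilde s θ g).eval ((starRingEnd ℂ) (θ k)))) =
      ((Complex.normSq (g k) *
          Complex.normSq ((tPoly s θ k).eval ((starRingEnd ℂ) (θ k))) *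
          Complex.normSq (Complex.exp ((γ : ℂ) * Complex.I) * θ k ^ n - 1) : ℝ) : ℂ) :=
  M_at_conj_theta_general s n γ θ hθT g
end
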